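/- Let X and Y be Hilbert spaces, T : X → Y a bounded linear operator with a least-squares projection approximation {(X_n, T_n)}. Then the orthogonal projections onto the ranges R(T_n) = T(X_n) converge strongly to the orthogonal projection onto the closure of R(T): s-lim_{n→∞} P_{T(X_n)} = P_{cl R(T)}. -/

import Mathlib

/-!
Write `M = cl R(T)` and `Mₙ = T(Xₙ) ⊆ M`. Since `y - P_M y ⊥ M ⊇ Mₙ`, we have `P_{Mₙ} y = P_{Mₙ} (P_M y)`,
so it suffices that `P_{Mₙ} z → z` for every `z ∈ M`. As `P_{Mₙ} z` is the best approximation of `z`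
in `Mₙ`, this holds as soon as `z` is eventually within any `ε` of `Mₙ`; and indeed `z` is close to
some `T x`, which is close to `T (P_{Xₙ} x) ∈ Mₙ` for large `n` because `P_{Xₙ} x → x`.
-/

open Filter Topology Metric Submodule ContinuousLinearMap

/-- Orthogonal projection onto a subspace `K` (as an operator `H →L[ℝ] H`),
defined whenever `K` admits orthogonal projections (e.g. `K` closed). -/
noncomputable def orthProj {H : Type*} [NormedAddCommGroup H] [InnerProductSpace ℝ H]
    (K : Submodule ℝ H) : H →L[ℝ] H :=
  open scoped Classical in
  if h : HasOrthogonalProjection K then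
    haveI := h
    K.subtypeL.comp (orthogonalProjection K)
  else 0

section orthProj

variable {H : Type*} [NormedAddCommGroup H] [InnerProductSpace ℝ H]

lemma orthProj_eq_starProjection (K : Submodule ℝ H) [h : K.HasOrthogonalProjection] :
    orthProj K = K.starProjection := by
  simp [orthProj, dif_pos h, starProjection]

lemma orthProj_apply_mem (K : Submodule ℝ H) (x : H) : orthProj K x ∈ K := by
  by_cases h : K.HasOrthogonalProjection
  · rw [orthProj_eq_starProjection]
    exact K.starProjection_apply_mem x
  · simp [orthProj, dif_neg h]

end orthProj

section starProjection

variable {𝕜 E : Type*} [RCLike 𝕜] [NormedAddCommGroup E] [InnerProductSpace 𝕜 E]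

lemma Submodule.norm_sub_starProjection_le {K : Submodule 𝕜 E} [K.HasOrthogonalProjection]
    (x : E) {v : E} (hv : v ∈ K) : ‖x - K.starProjection x‖ ≤ ‖x - v‖ := by
  rw [starProjection_minimal]
  exact ciInf_le ⟨0, fun _ ⟨w, hw⟩ => hw ▸ norm_nonneg _⟩ (⟨v, hv⟩ : K)

lemma Submodule.tendsto_starProjection_self {ι : Type*} {l : Filter ι} {K : ι → Submodule 𝕜 E}
    [∀ i, (K i).HasOrthogonalProjection] {z : E}
    (h : ∀ ε > 0, ∀ᶠ i in l, ∃ v ∈ K i, dist z v < ε) :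
    Tendsto (fun i => (K i).starProjection z) l (𝓝 z) := by
  refine Metric.tendsto_nhds.mpr fun ε hε => ?_
  filter_upwards [h ε hε] with i ⟨v, hv, hzv⟩
  rw [dist_comm, dist_eq_norm]
  exact (norm_sub_starProjection_le z hv).trans_lt (by rwa [← dist_eq_norm])

end starProjection

lemma ContinuousLinearMap.eventually_exists_mem_map_dist_lt {𝕜 E F ι : Type*} [NormedField 𝕜]
    [SeminormedAddCommGroup E] [NormedSpace 𝕜 E] [SeminormedAddCommGroup F] [NormedSpace 𝕜 F]
    (T : E →L[𝕜] F) {l : Filter ι} {V : ι → Submodule 𝕜 E}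
    (happrox : ∀ x, ∃ u : ι → E, (∀ i, u i ∈ V i) ∧ Tendsto u l (𝓝 x))
    {z : F} (hz : z ∈ (LinearMap.range (T : E →ₗ[𝕜] F)).topologicalClosure) {ε : ℝ} (hε : 0 < ε) :
    ∀ᶠ i in l, ∃ v ∈ (V i).map (T : E →ₗ[𝕜] F), dist z v < ε := by
  rw [← SetLike.mem_coe, topologicalClosure_coe, Metric.mem_closure_iff] at hz
  obtain ⟨_, ⟨x, rfl⟩, hzx⟩ := hz (ε / 2) (half_pos hε)
  obtain ⟨u, huV, hux⟩ := happrox x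
  have hTu : Tendsto (fun i => T (u i)) l (𝓝 (T x)) := (T.continuous.tendsto x).comp hux
  filter_upwards [Metric.tendsto_nhds.mp hTu (ε / 2) (half_pos hε)] with i hi
  refine ⟨T (u i), mem_map_of_mem (huV i), ?_⟩
  calc dist z (T (u i)) ≤ dist z (T x) + dist (T (u i)) (T x) := dist_triangle_right _ _ _
    _ < ε / 2 + ε / 2 := add_lt_add hzx hi
    _ = ε := add_halves ε

variable {X Y : Type*} [NormedAddCommGroup X] [InnerProductSpace ℝ X] [CompleteSpace X]
  [NormedAddCommGroup Y] [InnerProductSpace ℝ Y] [CompleteSpace Y]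

theorem stmt6_general
    (T : X →L[ℝ] Y) (Xn : ℕ → Submodule ℝ X)
    (hfin : ∀ n, FiniteDimensional ℝ (Xn n))
    (hproj : ∀ x : X, Tendsto (fun n => orthProj (Xn n) x) atTop (𝓝 x)) :
    ∀ y : Y, Tendsto (fun n => orthProj ((Xn n).map (T : X →ₗ[ℝ] Y)) y) atTop
      (𝓝 (orthProj (LinearMap.range (T : X →ₗ[ℝ] Y)).topologicalClosure y)) := by
  intro y
  set M := (LinearMap.range (T : X →ₗ[ℝ] Y)).topologicalClosure
  have : ∀ n, FiniteDimensional ℝ ((Xn n).map (T : X →ₗ[ℝ] Y)) := fun n =>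
    have := hfin n; Module.Finite.map _ _
  have hle : ∀ n, (Xn n).map (T : X →ₗ[ℝ] Y) ≤ M := fun n =>
    LinearMap.map_le_range.trans (le_topologicalClosure _)
  have hproj_eq : ∀ n, ((Xn n).map (T : X →ₗ[ℝ] Y)).starProjection y =
      ((Xn n).map (T : X →ₗ[ℝ] Y)).starProjection (M.starProjection y) := fun n =>
    (DFunLike.congr_fun (starProjection_comp_starProjection_of_le (hle n)) y).symm
  simp only [orthProj_eq_starProjection, hproj_eq]
  exact tendsto_starProjection_self fun ε hε =>
    T.eventually_exists_mem_map_dist_lt (fun x => ⟨_, fun n => orthProj_apply_mem _ x, hproj x⟩)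
      (M.starProjection_apply_mem y) hε

/-- `s-lim P_{T(Xₙ)} = P_{cl R(T)}`. -/
theorem stmt6
    (T : X →L[ℝ] Y) (Xn : ℕ → Submodule ℝ X)
    (hfin : ∀ n, FiniteDimensional ℝ (Xn n))
    (hinf : ¬ FiniteDimensional ℝ X)
    (hproj : ∀ x : X, Tendsto (fun n => orthProj (Xn n) x) atTop (𝓝 x))
    (Tn : ℕ → X →L[ℝ] Y) (hTn : ∀ n, Tn n = T.comp (orthProj (Xn n))) :
    ∀ y : Y, Tendsto (fun n => orthProj ((Xn n).map (T : X →ₗ[ℝ] Y)) y) atTop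
      (𝓝 (orthProj (LinearMap.range (T : X →ₗ[ℝ] Y)).topologicalClosure y)) :=
  stmt6_general T Xn hfin hproj
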